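/- The image of the homomorphism φ : U(1) × SU(2) × SU(3) → SU(5), φ(α,A,B) = diag(α³A, α⁻²B), is exactly the subgroup S(U(2)×U(3)) = {(A,B) ∈ U(2)×U(3) embedded block-diagonally : det A · det B = 1} of SU(5). Consequently (U(1)×SU(2)×SU(3))/ker φ ≅ S(U(2)×U(3)). -/

import Mathlib

/-!
The scalars `α³` and `α⁻²` lie on the unit circle, so `φ(α, A, B)` has unitary blocks, with
determinants `α⁶` and `α⁻⁶`. Conversely, for `diag(A, B)` with `det A · det B = 1`, pick a sixth
root `α` of `det A` on the circle: then `α⁻³ A ∈ SU(2)`, `α² B ∈ SU(3)` (its determinant is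
`α⁶ det B = det A · det B`), and `φ(α, α⁻³ A, α² B) = diag(A, B)`.
-/

/-- `SU n` is the special unitary group of `n × n` complex matrices. -/
abbrev SU (n : ℕ) := Matrix.specialUnitaryGroup (Fin n) ℂ

/-- The homomorphism `φ : U(1) × SU(2) × SU(3) → SU(5)` (written with values in
`5 × 5` matrices), `φ(α, A, B) = diag(α³ A, α⁻² B)`. -/
noncomputable def phi (x : Circle × SU 2 × SU 3) : Matrix (Fin 5) (Fin 5) ℂ :=
  Matrix.reindex finSumFinEquiv finSumFinEquiv
    (Matrix.fromBlocks (((x.1 : ℂ) ^ 3) • (x.2.1 : Matrix (Fin 2) (Fin 2) ℂ)) 0 0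
      ((((x.1 : ℂ) ^ 2)⁻¹) • (x.2.2 : Matrix (Fin 3) (Fin 3) ℂ)))

/-- The subgroup `S(U(2)×U(3))` of `SU(5)`: block-diagonal matrices `diag(A, B)` with
`A ∈ U(2)`, `B ∈ U(3)` and `det A · det B = 1`. -/
def SU2xU3 : Set (Matrix (Fin 5) (Fin 5) ℂ) :=
  {M | ∃ A ∈ Matrix.unitaryGroup (Fin 2) ℂ, ∃ B ∈ Matrix.unitaryGroup (Fin 3) ℂ,
    A.det * B.det = 1 ∧ M = Matrix.reindex finSumFinEquiv finSumFinEquiv (Matrix.fromBlocks A 0 0 B)}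

namespace Circle

theorem coe_mem_unitary (z : Circle) : (z : ℂ) ∈ unitary ℂ := by
  rw [Unitary.mem_iff_star_mul_self, Complex.star_def, ← coe_inv_eq_conj, ← coe_mul,
    inv_mul_cancel, coe_one]

theorem inv_coe_pow_mem_unitary (z : Circle) (n : ℕ) : ((z : ℂ) ^ n)⁻¹ ∈ unitary ℂ := by
  rw [← coe_pow, ← coe_inv]
  exact coe_mem_unitary _

theorem exists_pow_eq (z : Circle) {n : ℕ} (hn : n ≠ 0) : ∃ w : Circle, w ^ n = z := by
  obtain ⟨t, rfl⟩ := exp_surjective z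
  exact ⟨exp (t / n), by rw [← exp_natCast_mul, mul_div_cancel₀ _ (Nat.cast_ne_zero.2 hn)]⟩

theorem exists_coe_pow_eq_of_mem_unitary {u : ℂ} (hu : u ∈ unitary ℂ) {n : ℕ} (hn : n ≠ 0) :
    ∃ w : Circle, (w : ℂ) ^ n = u := by
  obtain ⟨w, hw⟩ :=
    exists_pow_eq ⟨u, mem_sphere_zero_iff_norm.2 (CStarRing.norm_of_mem_unitary hu)⟩ hn
  exact ⟨w, congrArg Subtype.val hw⟩

end Circle

namespace Matrix

theorem reindex_fromBlocks_diag_mul {l m n R : Type*} [Fintype l] [Fintype m] [Fintype n]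
    [NonUnitalNonAssocSemiring R] (e : m ⊕ n ≃ l) (A A' : Matrix m m R) (B B' : Matrix n n R) :
    reindex e e (fromBlocks A 0 0 B) * reindex e e (fromBlocks A' 0 0 B') =
      reindex e e (fromBlocks (A * A') 0 0 (B * B')) := by
  simp [fromBlocks_multiply]

theorem smul_mem_specialUnitaryGroup {n α : Type*} [Fintype n] [DecidableEq n] [CommRing α]
    [StarRing α] {c : α} (hc : c ∈ unitary α) {M : Matrix n n α} (hM : M ∈ unitaryGroup n α)
    (hdet : c ^ Fintype.card n * M.det = 1) : c • M ∈ specialUnitaryGroup n α :=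
  mem_specialUnitaryGroup_iff.2 ⟨Unitary.smul_mem_of_mem hc hM, by rw [det_smul, hdet]⟩

end Matrix

theorem phi_mul (x y : Circle × SU 2 × SU 3) : phi (x * y) = phi x * phi y := by
  rw [phi, phi, phi, Matrix.reindex_fromBlocks_diag_mul, smul_mul_smul_comm, smul_mul_smul_comm]
  simp only [Prod.fst_mul, Prod.snd_mul, Circle.coe_mul, Submonoid.coe_mul, mul_pow, mul_inv]

theorem phi_mem_SU2xU3 (x : Circle × SU 2 × SU 3) : phi x ∈ SU2xU3 := by
  obtain ⟨α, A, B⟩ := x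
  refine ⟨_, Unitary.smul_mem_of_mem (pow_mem α.coe_mem_unitary 3) A.2.1,
    _, Unitary.smul_mem_of_mem (α.inv_coe_pow_mem_unitary 2) B.2.1, ?_, rfl⟩
  rw [Matrix.det_smul, Matrix.det_smul, (Matrix.mem_specialUnitaryGroup_iff.1 A.2).2,
    (Matrix.mem_specialUnitaryGroup_iff.1 B.2).2, Fintype.card_fin, Fintype.card_fin]
  field_simp [α.coe_ne_zero]

theorem SU2xU3_subset_range_phi : SU2xU3 ⊆ Set.range phi := by
  rintro _ ⟨A, hA, B, hB, hdet, rfl⟩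
  obtain ⟨α, hα⟩ :=
    Circle.exists_coe_pow_eq_of_mem_unitary (Matrix.det_of_mem_unitary hA) (n := 6) (by norm_num)
  have hA' : ((α : ℂ) ^ 3)⁻¹ • A ∈ SU 2 :=
    Matrix.smul_mem_specialUnitaryGroup (α.inv_coe_pow_mem_unitary 3) hA (by
      rw [Fintype.card_fin, ← hα]; field_simp)
  have hB' : ((α : ℂ) ^ 2) • B ∈ SU 3 :=
    Matrix.smul_mem_specialUnitaryGroup (pow_mem α.coe_mem_unitary 2) hB (by
      rw [Fintype.card_fin, ← pow_mul, hα, hdet])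
  refine ⟨(α, ⟨_, hA'⟩, ⟨_, hB'⟩), ?_⟩
  have hα0 := α.coe_ne_zero
  simp only [phi, smul_smul, mul_inv_cancel₀ (pow_ne_zero _ hα0),
    inv_mul_cancel₀ (pow_ne_zero _ hα0), one_smul]

/-- `φ` is a homomorphism whose image is exactly `S(U(2)×U(3))`; consequently, by the first
isomorphism theorem, `(U(1)×SU(2)×SU(3))/ker φ ≅ S(U(2)×U(3))`. -/
theorem range_phi_eq_SU2xU3 :
    (∀ x y : Circle × SU 2 × SU 3, phi (x * y) = phi x * phi y) ∧
    Set.range phi = SU2xU3 :=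
  ⟨phi_mul, (Set.range_subset_iff.2 phi_mem_SU2xU3).antisymm SU2xU3_subset_range_phi⟩
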